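/- S(1) = (ln(2π) - γ - 1)/2, where S(a) = Σ_{n=1}^∞ [ln(n/a) - a/(2n) - ψ(n/a)], ψ is the digamma function, and γ is the Euler–Mascheroni constant. -/

import Mathlib

/-!
With `ψ(n) = H_{n-1} - γ`, the `n`-th term is `-e n` for `e = harmonicRemainder`,
`e n = H_n - log n - γ - 1/(2n)`.
Expressing `log N!` through Stirling's sequence `s N`, the `N`-th partial sum becomes
`log (s N) + log 2 / 2 - (H_N - log N) / 2 - 1/2 - N e N`, so the value follows from `s N → √π`
once `N e N → 0`. Both this and `e n ≤ 0` (the terms are nonnegative) come from the identity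
`(n + 1/2) (e n - e (n+1)) = (log s n - log s (n+1)) - 1/(4n(n+1))`: by Robbins' bound
`0 ≤ log s n - log s (n+1) ≤ 1/(12n(n+1))`, the sequence `e n` increases and `e n + 1/(4n(n+1))`
decreases, both to `0`.
-/

open Real

/-- The digamma function `ψ(x) = Γ'(x)/Γ(x) = d(log Γ)/dx`. -/
noncomputable def digamma (x : ℝ) : ℝ := deriv (fun y : ℝ => Real.log (Real.Gamma y)) x

/-- `S(a) = Σ_{n=1}^∞ [ln(n/a) - a/(2n) - ψ(n/a)]`. -/
noncomputable def S (a : ℝ) : ℝ :=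
  ∑' n : ℕ+, (Real.log ((n : ℝ) / a) - a / (2 * (n : ℝ)) - digamma ((n : ℝ) / a))

open Filter Topology Finset Stirling
open scoped Nat

local notation "γ" => Real.eulerMascheroniConstant

noncomputable def harmonicRemainder (n : ℕ) : ℝ := harmonic n - log n - γ - 1 / (2 * n)

lemma tendsto_harmonicRemainder : Tendsto harmonicRemainder atTop (𝓝 0) := by
  have h := (tendsto_harmonic_sub_log.sub_const γ).sub
    ((tendsto_const_nhds (x := (1 : ℝ))).div_atTop
      (tendsto_natCast_atTop_atTop.const_mul_atTop (two_pos (α := ℝ))))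
  rw [sub_self, sub_zero] at h
  exact h

lemma harmonicRemainder_succ_sub_succ (k : ℕ) :
    harmonicRemainder (k + 1) - harmonicRemainder (k + 2) = 2 / (2 * k + 3) *
      (log (stirlingSeq (k + 1)) - log (stirlingSeq (k + 2)) - 1 / (4 * (k + 1) * (k + 2))) := by
  rw [log_stirlingSeq_formula, log_stirlingSeq_formula, harmonicRemainder, harmonicRemainder,
    harmonic_succ (k + 1), Nat.factorial_succ (k + 1)]
  push_cast
  rw [log_mul (x := (k : ℝ) + 1 + 1) (by positivity) (by positivity),
    log_mul two_ne_zero (by positivity), log_mul two_ne_zero (by positivity),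
    log_div (by positivity) (exp_ne_zero 1), log_div (by positivity) (exp_ne_zero 1), log_exp]
  field_simp
  ring_nf

lemma monotone_harmonicRemainder_succ : Monotone fun k => harmonicRemainder (k + 1) := by
  refine monotone_nat_of_le_succ fun k => ?_
  have robbins := log_stirlingSeq_sdiff_le (k + 1)
  push_cast at robbins
  have robbins_weak :
      1 / (12 * ((k : ℝ) + 1) * (k + 1 + 1)) ≤ 1 / (4 * (k + 1) * (k + 2)) := by
    gcongr 1 / ?_; nlinarith [k.cast_nonneg (α := ℝ)]
  rw [← sub_nonpos, harmonicRemainder_succ_sub_succ]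
  exact mul_nonpos_of_nonneg_of_nonpos (by positivity) (by linarith)

lemma antitone_harmonicRemainder_succ_add :
    Antitone fun k : ℕ => harmonicRemainder (k + 1) + 1 / (4 * (k + 1) * (k + 2)) := by
  refine antitone_nat_of_succ_le fun k => ?_
  have stirling_step : 0 ≤ 2 / (2 * (k : ℝ) + 3) *
      (log (stirlingSeq (k + 1)) - log (stirlingSeq (k + 2))) :=
    mul_nonneg (by positivity) (sub_nonneg.mpr (log_stirlingSeq'_antitone k.le_succ))
  have scaled : 2 / (2 * (k : ℝ) + 3) * (1 / (4 * (k + 1) * (k + 2))) =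
      1 / (2 * (k + 1) * (k + 2) * (2 * k + 3)) := by
    field_simp; ring
  have step := harmonicRemainder_succ_sub_succ k
  rw [mul_sub, scaled] at step
  have telescope : (1 : ℝ) / (4 * (k + 1) * (k + 2)) - 1 / (4 * (k + 1 + 1) * (k + 1 + 2)) =
      1 / (2 * (k + 1) * (k + 2) * (k + 3)) := by
    field_simp; ring
  have compare : 1 / (2 * ((k : ℝ) + 1) * (k + 2) * (2 * k + 3)) ≤
      1 / (2 * (k + 1) * (k + 2) * (k + 3)) := by
    gcongr 1 / (_ * ?_); linarith [k.cast_nonneg (α := ℝ)]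
  push_cast
  linarith

lemma harmonicRemainder_succ_nonpos (k : ℕ) : harmonicRemainder (k + 1) ≤ 0 :=
  monotone_harmonicRemainder_succ.ge_of_tendsto
    (tendsto_harmonicRemainder.comp (tendsto_add_atTop_nat 1)) k

lemma neg_le_harmonicRemainder_succ (k : ℕ) :
    -(1 / (4 * (k + 1) * (k + 2))) ≤ harmonicRemainder (k + 1) := by
  have hden : Tendsto (fun k : ℕ => 4 * ((k : ℝ) + 1) * (k + 2)) atTop atTop :=
    tendsto_atTop_mono (fun k => by nlinarith [k.cast_nonneg (α := ℝ)])
      tendsto_natCast_atTop_atTop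
  have lim := (tendsto_harmonicRemainder.comp (tendsto_add_atTop_nat 1)).add
    (tendsto_const_nhds (x := (1 : ℝ)).div_atTop hden)
  rw [add_zero] at lim
  linarith [antitone_harmonicRemainder_succ_add.le_of_tendsto lim k]

lemma tendsto_mul_harmonicRemainder :
    Tendsto (fun n : ℕ => n * harmonicRemainder n) atTop (𝓝 0) := by
  rw [← tendsto_add_atTop_iff_nat 1]
  refine squeeze_zero_norm (a := fun k : ℕ => 1 / (4 * ((k : ℝ) + 2))) (fun k => ?_) ?_
  · have lower := neg_le_harmonicRemainder_succ k
    have upper := harmonicRemainder_succ_nonpos k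
    have bound : ((k : ℝ) + 1) * (1 / (4 * (k + 1) * (k + 2))) = 1 / (4 * (k + 2)) := by
      field_simp
    rw [Real.norm_eq_abs, abs_mul, abs_of_nonpos upper, Nat.abs_cast, ← bound]
    push_cast
    gcongr
    linarith
  · exact tendsto_const_nhds.div_atTop
      (tendsto_atTop_add_const_right _ 2 tendsto_natCast_atTop_atTop |>.const_mul_atTop four_pos)

lemma sum_range_harmonicRemainder_succ (N : ℕ) :
    ∑ m ∈ range N, harmonicRemainder (m + 1) =
      N * harmonic N + harmonic N / 2 - N - N * γ - log (N ! : ℝ) := by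
  induction N with
  | zero => simp
  | succ N ih =>
    rw [sum_range_succ, ih, harmonicRemainder, harmonic_succ, Nat.factorial_succ]
    push_cast
    rw [log_mul (by positivity) (by positivity)]
    field_simp
    ring

lemma tendsto_sum_range_harmonicRemainder_succ :
    Tendsto (fun N => ∑ m ∈ range N, harmonicRemainder (m + 1)) atTop
      (𝓝 (-((log (2 * π) - γ - 1) / 2))) := by
  have lim := (((tendsto_mul_harmonicRemainder.add (tendsto_harmonic_sub_log.div_const 2)).sub
    (tendsto_stirlingSeq_sqrt_pi.log (by positivity))).sub_const (log 2 / 2)).add_const (1 / 2)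
  convert lim.congr' ?_ using 2
  · rw [log_sqrt pi_pos.le, log_mul two_ne_zero pi_pos.ne']
    ring
  · filter_upwards [eventually_ne_atTop 0] with N hN
    have hN' : (0 : ℝ) < N := by positivity
    rw [sum_range_harmonicRemainder_succ, log_stirlingSeq_formula, harmonicRemainder,
      log_mul two_ne_zero hN'.ne', log_div hN'.ne' (exp_ne_zero 1), log_exp]
    field_simp
    ring

lemma hasSum_neg_harmonicRemainder_succ :
    HasSum (fun m : ℕ => -harmonicRemainder (m + 1)) ((log (2 * π) - γ - 1) / 2) := by
  rw [hasSum_iff_tendsto_nat_of_nonneg fun m => neg_nonneg.mpr (harmonicRemainder_succ_nonpos m)]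
  simpa only [sum_neg_distrib, neg_neg] using tendsto_sum_range_harmonicRemainder_succ.neg

lemma digamma_natCast_add_one (m : ℕ) : digamma ((m : ℝ) + 1) = harmonic m - γ := by
  have hΓ : DifferentiableAt ℝ Gamma ((m : ℝ) + 1) :=
    differentiableAt_Gamma fun k => by
      linarith [k.cast_nonneg (α := ℝ), m.cast_nonneg (α := ℝ)]
  have hfac : (m ! : ℝ) ≠ 0 := by positivity
  rw [digamma, deriv.log hΓ (Gamma_pos_of_pos (by positivity)).ne', deriv_Gamma_nat,
    Gamma_nat_eq_factorial]
  field_simp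
  ring

lemma log_sub_digamma_natCast_add_one (m : ℕ) :
    log ((m : ℝ) + 1) - 1 / (2 * ((m : ℝ) + 1)) - digamma ((m : ℝ) + 1) =
      -harmonicRemainder (m + 1) := by
  rw [digamma_natCast_add_one, harmonicRemainder, harmonic_succ]
  push_cast
  field_simp
  ring

theorem S_one :
    S 1 = (Real.log (2 * π) - Real.eulerMascheroniConstant - 1) / 2 := by
  rw [S, ← Equiv.pnatEquivNat.symm.tsum_eq, ← hasSum_neg_harmonicRemainder_succ.tsum_eq]
  congr 1 with m
  rw [Equiv.pnatEquivNat_symm_apply, Nat.succPNat_coe, Nat.cast_succ, div_one,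
    log_sub_digamma_natCast_add_one]
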